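/- arXiv:2206.05610 — 4 statements merged into one kernel-verified Lean document; each statement's English description precedes it below -/
import Mathlib

section
/- For every integer n ≥ 1, the difference of consecutive Fourier coefficients of 1/cos(x/4), namely a_n - a_{n-1} where a_n = (8/π) ∫_0^{π/4} cos(4nt)/cos(t) dt, equals (8√2/π) (-1)^n [1/(4n-3) - 1/(4n-1)]. -/
open Real

/-- The Fourier cosine coefficients of F(x) = 1/cos(x/4) on [-π, π]. -/
noncomputable def fourierA (n : ℕ) : ℝ :=
  (8 / π) * ∫ t in (0:ℝ)..(π / 4), Real.cos (4 * n * t) / Real.cos t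

/-! The product formula cos (a + 2t) - cos (a - 2t) = 2 cos t (cos (a + t) - cos (a - t)) cancels
the denominator cos t, so aₙ - aₙ₋₁ is the integral of 2 cos ((4n-1)t) - 2 cos ((4n-3)t) over
[0, π/4]. At the endpoint both sines equal -(-1)ⁿ √2/2. -/

open intervalIntegral

lemma cos_add_two_mul_sub_cos_sub_two_mul (a t : ℝ) :
    cos (a + 2 * t) - cos (a - 2 * t) = 2 * cos t * (cos (a + t) - cos (a - t)) := by
  simp only [cos_add, cos_sub, sin_two_mul, cos_two_mul]
  ring

lemma cos_pos_of_mem_uIcc_zero_pi_div_four {t : ℝ} (ht : t ∈ Set.uIcc 0 (π / 4)) :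
    0 < cos t := by
  rw [Set.uIcc_of_le (by positivity)] at ht
  exact cos_pos_of_mem_Ioo ⟨by linarith [ht.1, pi_pos], by linarith [ht.2, pi_pos]⟩

lemma integral_cos_mul_of_ne_zero {c : ℝ} (hc : c ≠ 0) (b : ℝ) :
    ∫ t in (0:ℝ)..b, cos (c * t) = sin (c * b) / c := by
  rw [integral_comp_mul_left cos hc]
  simp [integral_cos, div_eq_inv_mul]

lemma intervalIntegrable_cos_mul_div_cos {b : ℝ} (hb : ∀ t ∈ Set.uIcc 0 b, cos t ≠ 0) (c : ℝ) :
    IntervalIntegrable (fun t => cos (c * t) / cos t) MeasureTheory.volume 0 b :=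
  (by fun_prop : Continuous fun t => cos (c * t)).continuousOn.div
    continuous_cos.continuousOn hb |>.intervalIntegrable

lemma integral_cos_mul_div_cos_sub {b : ℝ} (hb : ∀ t ∈ Set.uIcc 0 b, cos t ≠ 0) {c : ℝ}
    (hc₁ : c ≠ 1) (hc₃ : c ≠ 3) :
    (∫ t in (0:ℝ)..b, cos (c * t) / cos t) - ∫ t in (0:ℝ)..b, cos ((c - 4) * t) / cos t
      = 2 * (sin ((c - 1) * b) / (c - 1) - sin ((c - 3) * b) / (c - 3)) := by
  have hcos (c' : ℝ) : IntervalIntegrable (fun t => cos (c' * t)) MeasureTheory.volume 0 b :=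
    (by fun_prop : Continuous fun t => cos (c' * t)).intervalIntegrable _ _
  have hdiff : ∀ t ∈ Set.uIcc 0 b, cos (c * t) / cos t - cos ((c - 4) * t) / cos t
      = 2 * cos ((c - 1) * t) - 2 * cos ((c - 3) * t) := fun t ht => by
    have h := cos_add_two_mul_sub_cos_sub_two_mul ((c - 2) * t) t
    rw [show (c - 2) * t + 2 * t = c * t by ring, show (c - 2) * t - 2 * t = (c - 4) * t by ring,
      show (c - 2) * t + t = (c - 1) * t by ring, show (c - 2) * t - t = (c - 3) * t by ring] at h
    rw [div_sub_div_same, div_eq_iff (hb t ht), h]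
    ring
  rw [← integral_sub (intervalIntegrable_cos_mul_div_cos hb c)
      (intervalIntegrable_cos_mul_div_cos hb (c - 4)), integral_congr hdiff,
    integral_sub ((hcos _).const_mul 2) ((hcos _).const_mul 2), integral_const_mul,
    integral_const_mul, integral_cos_mul_of_ne_zero (sub_ne_zero.2 hc₁),
    integral_cos_mul_of_ne_zero (sub_ne_zero.2 hc₃)]
  ring

lemma sin_nat_mul_pi_sub_pi_div_four (n : ℕ) :
    sin (n * π - π / 4) = -(-1) ^ n * (√2 / 2) := by
  rw [sin_nat_mul_pi_sub, sin_pi_div_four]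
  ring

lemma sin_nat_mul_pi_sub_three_mul_pi_div_four (n : ℕ) :
    sin (n * π - 3 * (π / 4)) = -(-1) ^ n * (√2 / 2) := by
  rw [sin_nat_mul_pi_sub, show 3 * (π / 4) = π - π / 4 by ring, sin_pi_sub, sin_pi_div_four]
  ring

/-- For n ≥ 1, aₙ - a_{n-1} = (8√2/π) (-1)ⁿ [1/(4n-3) - 1/(4n-1)]. -/
theorem fourier_coeff_difference (n : ℕ) (hn : 1 ≤ n) :
    fourierA n - fourierA (n - 1)
      = (8 * Real.sqrt 2 / π) * (-1 : ℝ) ^ n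
          * (1 / (4 * (n : ℝ) - 3) - 1 / (4 * (n : ℝ) - 1)) := by
  have hn' : (1 : ℝ) ≤ n := by exact_mod_cast hn
  have hc₁ : 4 * (n : ℝ) ≠ 1 := by linarith
  have hc₃ : 4 * (n : ℝ) ≠ 3 := by linarith
  have hcos : ∀ t ∈ Set.uIcc 0 (π / 4), cos t ≠ 0 :=
    fun t ht => (cos_pos_of_mem_uIcc_zero_pi_div_four ht).ne'
  have hshift : (4 * ((n - 1 : ℕ) : ℝ)) = 4 * n - 4 := by
    rw [Nat.cast_sub hn, Nat.cast_one]; ring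
  calc fourierA n - fourierA (n - 1)
      = 8 / π * ((∫ t in (0:ℝ)..π / 4, cos (4 * n * t) / cos t)
          - ∫ t in (0:ℝ)..π / 4, cos ((4 * n - 4) * t) / cos t) := by
        rw [fourierA, fourierA, hshift, mul_sub]
    _ = 8 / π * (2 * (sin (n * π - π / 4) / (4 * n - 1)
          - sin (n * π - 3 * (π / 4)) / (4 * n - 3))) := by
        rw [integral_cos_mul_div_cos_sub hcos hc₁ hc₃]
        ring_nf
    _ = _ := by
        rw [sin_nat_mul_pi_sub_pi_div_four, sin_nat_mul_pi_sub_three_mul_pi_div_four]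
        field_simp
        ring
end

section
/- The alternating series ∑_{k=1}^{∞} (-1)^{k-1} (1/(4k-3) - 1/(4k-1)) converges and its sum equals (√2/2) ln(1 + √2). -/
/-!
Expanding `1 / (1 + x⁴)` geometrically, the `j`-th term of the series is
`∫₀¹ (1 - x²) (-x⁴)ʲ dx`. The absolute values of these integrands sum to
`(1 - x²) / (1 - x⁴) = 1 / (1 + x²)`, so dominated convergence gives the sum
`∫₀¹ (1 - x²) / (1 + x⁴) dx`. From `1 + x⁴ = (x² + √2 x + 1)(x² - √2 x + 1)` a primitive is
`(√2 / 4) log ((x² + √2 x + 1) / (x² - √2 x + 1))`, and at `x = 1` this is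
`(√2 / 4) log ((2 + √2) / (2 - √2)) = (√2 / 2) log (1 + √2)`.
-/

open Real MeasureTheory Set intervalIntegral
open scoped Interval

lemma sq_add_mul_add_one_pos {c : ℝ} (hc : c ^ 2 < 4) (x : ℝ) : 0 < x ^ 2 + c * x + 1 := by
  nlinarith [sq_nonneg (2 * x + c)]

lemma hasDerivAt_log_sq_add_mul_add_one {c : ℝ} (hc : c ^ 2 < 4) (x : ℝ) :
    HasDerivAt (fun y => log (y ^ 2 + c * y + 1)) ((2 * x + c) / (x ^ 2 + c * x + 1)) x := by
  have h : HasDerivAt (fun y => y ^ 2 + c * y + 1) (2 * x + c) x := by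
    simpa using ((hasDerivAt_pow 2 x).add ((hasDerivAt_id x).const_mul c)).add_const 1
  exact h.log (sq_add_mul_add_one_pos hc x).ne'

lemma one_add_pow_four_eq_mul (x : ℝ) :
    1 + x ^ 4 = (x ^ 2 + √2 * x + 1) * (x ^ 2 + -√2 * x + 1) := by
  linear_combination x ^ 2 * sq_sqrt zero_le_two

noncomputable def quarticPrimitive (x : ℝ) : ℝ :=
  √2 / 4 * (log (x ^ 2 + √2 * x + 1) - log (x ^ 2 + -√2 * x + 1))

lemma hasDerivAt_quarticPrimitive (x : ℝ) :
    HasDerivAt quarticPrimitive ((1 - x ^ 2) / (1 + x ^ 4)) x := by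
  have hs : √2 ^ 2 = 2 := sq_sqrt zero_le_two
  have hc : √2 ^ 2 < 4 := by rw [hs]; norm_num
  have hc' : (-√2) ^ 2 < 4 := by rwa [neg_sq]
  refine (((hasDerivAt_log_sq_add_mul_add_one hc x).sub
    (hasDerivAt_log_sq_add_mul_add_one hc' x)).const_mul (√2 / 4)).congr_deriv ?_
  have hA := (sq_add_mul_add_one_pos hc x).ne'
  have hB := (sq_add_mul_add_one_pos hc' x).ne'
  rw [div_sub_div _ _ hA hB, ← one_add_pow_four_eq_mul, ← mul_div_assoc]
  congr 1
  linear_combination (1 - x ^ 2) / 2 * hs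

lemma integral_one_sub_sq_div_one_add_pow_four :
    ∫ x in (0 : ℝ)..1, (1 - x ^ 2) / (1 + x ^ 4) = √2 / 2 * log (1 + √2) := by
  have hcont : Continuous fun x : ℝ => (1 - x ^ 2) / (1 + x ^ 4) := by
    fun_prop (disch := intro x; positivity)
  rw [integral_eq_sub_of_hasDerivAt (fun x _ => hasDerivAt_quarticPrimitive x)
    (hcont.intervalIntegrable 0 1)]
  have hs : √2 ^ 2 = 2 := sq_sqrt zero_le_two
  have hlt : √2 < 2 := by nlinarith [sqrt_nonneg 2]
  have hsq : 2 + √2 = (1 + √2) ^ 2 * (2 - √2) := by linear_combination √2 * hs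
  have h0 : quarticPrimitive 0 = 0 := by simp [quarticPrimitive]
  have h1 : quarticPrimitive 1 = √2 / 4 * (log ((1 + √2) ^ 2 * (2 - √2)) - log (2 - √2)) := by
    rw [quarticPrimitive, ← hsq]
    ring_nf
  rw [h0, h1, log_mul (by positivity) (by linarith), log_pow]
  push_cast
  ring

lemma integral_one_sub_sq_mul_neg_pow_four (n : ℕ) :
    ∫ x in (0 : ℝ)..1, (1 - x ^ 2) * (-x ^ 4) ^ n
      = (-1) ^ n * (1 / (4 * (n : ℝ) + 1) - 1 / (4 * (n : ℝ) + 3)) := by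
  have h (x : ℝ) :
      (1 - x ^ 2) * (-x ^ 4) ^ n = (-1) ^ n * (x ^ (4 * n) - x ^ (4 * n + 2)) := by
    rw [neg_pow, ← pow_mul]; ring
  simp_rw [h]
  rw [intervalIntegral.integral_const_mul, intervalIntegral.integral_sub
    (intervalIntegrable_pow _) (intervalIntegrable_pow _), integral_pow, integral_pow]
  push_cast
  ring_nf

lemma pow_four_lt_one {x : ℝ} (hx : |x| < 1) : x ^ 4 < 1 := by
  have := (sq_lt_one_iff_abs_lt_one x).2 hx
  nlinarith [sq_nonneg x]

lemma hasSum_one_sub_sq_mul_pow_four {x : ℝ} (hx : |x| < 1) :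
    HasSum (fun n : ℕ => (1 - x ^ 2) * (x ^ 4) ^ n) (1 / (1 + x ^ 2)) := by
  have h := (hasSum_geometric_of_lt_one (by positivity) (pow_four_lt_one hx)).mul_left (1 - x ^ 2)
  have h2 : 1 - x ^ 2 ≠ 0 := (sub_pos.2 ((sq_lt_one_iff_abs_lt_one x).2 hx)).ne'
  rwa [show (1 : ℝ) - x ^ 4 = (1 - x ^ 2) * (1 + x ^ 2) by ring, mul_inv, ← mul_assoc,
    mul_inv_cancel₀ h2, one_mul, ← one_div] at h

lemma hasSum_one_sub_sq_mul_neg_pow_four {x : ℝ} (hx : |x| < 1) :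
    HasSum (fun n : ℕ => (1 - x ^ 2) * (-x ^ 4) ^ n) ((1 - x ^ 2) / (1 + x ^ 4)) := by
  have habs : |-x ^ 4| < 1 := by
    rw [abs_neg, abs_of_nonneg (by positivity)]
    exact pow_four_lt_one hx
  have h := (hasSum_geometric_of_abs_lt_one habs).mul_left (1 - x ^ 2)
  rwa [sub_neg_eq_add, ← div_eq_mul_inv] at h

lemma hasSum_integral_one_sub_sq_mul_neg_pow_four :
    HasSum (fun n : ℕ => ∫ x in (0 : ℝ)..1, (1 - x ^ 2) * (-x ^ 4) ^ n)
      (∫ x in (0 : ℝ)..1, (1 - x ^ 2) / (1 + x ^ 4)) := by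
  have hIoo : ∀ᵐ x ∂volume, x ∈ Ι (0 : ℝ) 1 → |x| < 1 := by
    filter_upwards [Measure.ae_ne volume 1] with x hx1 hx
    rw [uIoc_of_le zero_le_one] at hx
    exact abs_lt.2 ⟨by linarith [hx.1], lt_of_le_of_ne hx.2 hx1⟩
  refine hasSum_integral_of_dominated_convergence (fun n x => (1 - x ^ 2) * (x ^ 4) ^ n)
    (fun n => (by fun_prop : Continuous _).aestronglyMeasurable) (fun n => ?_) ?_ ?_ ?_
  · filter_upwards [hIoo] with x hx hmem
    have hx2 : 0 ≤ 1 - x ^ 2 := sub_nonneg.2 ((sq_le_one_iff_abs_le_one x).2 (hx hmem).le)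
    rw [norm_mul, norm_pow, norm_neg, Real.norm_of_nonneg (by positivity : (0 : ℝ) ≤ x ^ 4),
      Real.norm_of_nonneg hx2]
  · filter_upwards [hIoo] with x hx hmem
    exact (hasSum_one_sub_sq_mul_pow_four (hx hmem)).summable
  · have hcont : Continuous fun x : ℝ => 1 / (1 + x ^ 2) := by
      fun_prop (disch := intro x; positivity)
    refine (hcont.intervalIntegrable 0 1).congr_uIoo fun x hx => ?_
    rw [uIoo_of_le zero_le_one] at hx
    exact (hasSum_one_sub_sq_mul_pow_four (abs_lt.2 ⟨by linarith [hx.1], hx.2⟩)).tsum_eq.symm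
  · filter_upwards [hIoo] with x hx hmem
    exact hasSum_one_sub_sq_mul_neg_pow_four (hx hmem)

/-- The alternating series ∑_{k=1}^∞ (-1)^{k-1} (1/(4k-3) - 1/(4k-1)) converges to
(√2/2) ln(1+√2).  (Indexing over k = j+1 with j : ℕ.) -/
theorem alternating_series_sum :
    HasSum
      (fun j : ℕ =>
        (-1 : ℝ) ^ ((j + 1) - 1)
          * (1 / (4 * ((j : ℝ) + 1) - 3) - 1 / (4 * ((j : ℝ) + 1) - 1)))
      (Real.sqrt 2 / 2 * Real.log (1 + Real.sqrt 2)) := by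
  have h := hasSum_integral_one_sub_sq_mul_neg_pow_four
  simp only [integral_one_sub_sq_mul_neg_pow_four, integral_one_sub_sq_div_one_add_pow_four] at h
  convert h using 2 with j
  rw [Nat.add_sub_cancel]
  ring_nf
end

section
/- The Parseval identity for F(x) = 1/cos(x/4) on [-π, π] reads: (1/π) ∫_{-π}^{π} dt/cos²(t/4) = a_0²/2 + ∑_{n=1}^{∞} a_n², where a_n = (8/π) ∫_0^{π/4} cos(4nt)/cos(t) dt; in particular the series ∑_{n=1}^{∞} a_n² converges and equals 8/π - 32 ln²(1+√2)/π². -/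
/-!
For an even real function `f` in `L²(-π, π)` the complex Fourier coefficients at `n` and `-n`
both equal `aₙ / 2`, so Parseval's identity `∑ₙ |cₙ|² = (1/2π) ∫ |f|²` becomes
`a₀²/2 + ∑_{n ≥ 1} aₙ² = (1/π) ∫ f²`. For `f(x) = 1/cos(x/4)` the substitution `x = 4t` turns
the cosine coefficients into `fourierA`, the left-hand integral is `4 tan(t/4)` evaluated at `±π`,
i.e. `8`, and `a₀` comes from the primitive `log((1 + sin t)/cos t)` of `1/cos t`.
-/

open Real

open MeasureTheory Set

theorem integral_neg_self_eq_integral_add_comp_neg {E : Type*} [NormedAddCommGroup E]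
    [NormedSpace ℝ E] {g : ℝ → E} {a : ℝ} (hg : IntervalIntegrable g volume (-a) a) :
    ∫ x in -a..a, g x = ∫ x in 0..a, (g x + g (-x)) := by
  have h0 : (0 : ℝ) ∈ uIcc (-a) a := by
    rcases le_total 0 a with ha | ha
    · exact mem_uIcc.mpr (Or.inl ⟨by linarith, ha⟩)
    · exact mem_uIcc.mpr (Or.inr ⟨ha, by linarith⟩)
  have hleft : IntervalIntegrable g volume (-a) 0 := hg.mono_set (uIcc_subset_uIcc_left h0)
  have hright : IntervalIntegrable g volume 0 a := hg.mono_set (uIcc_subset_uIcc_right h0)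
  rw [← intervalIntegral.integral_add_adjacent_intervals hleft hright,
    intervalIntegral.integral_add hright, intervalIntegral.integral_comp_neg, neg_zero, add_comm]
  simpa using (IntervalIntegrable.iff_comp_neg (f := g)).mp hleft.symm

theorem memLp_restrict_Ioc_of_continuousOn {E : Type*} [NormedAddCommGroup E] {f : ℝ → E}
    {a b : ℝ} (hf : ContinuousOn f (Icc a b)) (p : ENNReal) :
    MemLp f p (volume.restrict (Ioc a b)) := by
  obtain ⟨C, hC⟩ := isCompact_Icc.exists_bound_of_continuousOn hf
  exact MemLp.of_bound ((hf.mono Ioc_subset_Icc_self).aestronglyMeasurable measurableSet_Ioc) C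
    ((ae_restrict_iff' measurableSet_Ioc).mpr
      (Filter.Eventually.of_forall fun x hx => hC x (Ioc_subset_Icc_self hx)))

theorem fourier_coe_add_fourier_coe_neg {T : ℝ} (n : ℤ) (x : ℝ) :
    fourier n (x : AddCircle T) + fourier n ((-x : ℝ) : AddCircle T)
      = (2 * cos (2 * π * n * x / T) : ℝ) := by
  rw [fourier_coe_apply, fourier_coe_apply]
  push_cast
  rw [Complex.two_cos]
  congr 2 <;> ring

lemma cos_natAbs_mul (n : ℤ) (x : ℝ) : cos ((n.natAbs : ℝ) * x) = cos (n * x) := by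
  rcases Int.natAbs_eq n with h | h <;> rw [h] <;> simp

noncomputable def cosineCoeff (f : ℝ → ℝ) (n : ℕ) : ℝ :=
  (2 / π) * ∫ t in (0:ℝ)..π, f t * cos (n * t)

theorem fourierCoeffOn_ofReal_of_even {f : ℝ → ℝ} (hf : Function.Even f)
    (hint : IntervalIntegrable f volume (-π) π) (n : ℤ) :
    fourierCoeffOn (neg_lt_self pi_pos) (fun x => (f x : ℂ)) n
      = (cosineCoeff f n.natAbs / 2 : ℝ) := by
  have hcont : Continuous fun x : ℝ => fourier (-n) (x : AddCircle (π - -π)) :=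
    (map_continuous _).comp continuous_quotient_mk'
  have hint' : IntervalIntegrable
      (fun x : ℝ => fourier (-n) (x : AddCircle (π - -π)) • (f x : ℂ)) volume (-π) π :=
    IntervalIntegrable.continuousOn_mul ⟨hint.1.ofReal, hint.2.ofReal⟩ hcont.continuousOn
  have hsymm : ∀ x : ℝ, fourier (-n) (x : AddCircle (π - -π)) • (f x : ℂ)
      + fourier (-n) ((-x : ℝ) : AddCircle (π - -π)) • (f (-x) : ℂ)
      = ((2 * (f x * cos (n * x)) : ℝ) : ℂ) := fun x => by
    have harg : 2 * π * ((-n : ℤ) : ℝ) * x / (π - -π) = -(n * x) := by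
      push_cast
      field_simp
      ring
    rw [hf x, smul_eq_mul, smul_eq_mul, ← add_mul, fourier_coe_add_fourier_coe_neg, harg, cos_neg]
    push_cast
    ring
  rw [fourierCoeffOn_eq_integral, integral_neg_self_eq_integral_add_comp_neg hint']
  simp_rw [hsymm, intervalIntegral.integral_ofReal, intervalIntegral.integral_const_mul,
    cosineCoeff, cos_natAbs_mul, Complex.real_smul, ← Complex.ofReal_mul]
  congr 1
  field_simp
  ring

theorem hasSum_sq_cosineCoeff {f : ℝ → ℝ} (hf : Function.Even f)
    (hL2 : MemLp f 2 (volume.restrict (Ioc (-π) π))) :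
    HasSum (fun n : ℕ => cosineCoeff f (n + 1) ^ 2)
      ((1 / π) * (∫ x in -π..π, f x ^ 2) - cosineCoeff f 0 ^ 2 / 2) := by
  have hint : IntervalIntegrable f volume (-π) π :=
    (intervalIntegrable_iff_integrableOn_Ioc_of_le (by linarith [pi_pos])).mpr
      (hL2.integrable one_le_two)
  have hparseval :=
    hasSum_sq_fourierCoeffOn (f := fun x => (f x : ℂ)) (neg_lt_self pi_pos) hL2.ofReal
  simp only [fourierCoeffOn_ofReal_of_even hf hint, Complex.norm_real, Real.norm_eq_abs,
    sq_abs] at hparseval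
  have hnat := (hasSum_nat_add_iff' 1).mpr hparseval.nat_add_neg
  simp only [Int.natAbs_neg, Int.natAbs_natCast, Finset.sum_range_one, Int.natAbs_zero,
    smul_eq_mul, show π - -π = 2 * π by ring] at hnat
  have hdouble : HasSum (fun n : ℕ => cosineCoeff f (n + 1) ^ 2) _ :=
    (hnat.mul_left 2).congr_fun fun n => by ring
  convert hdouble using 1
  ring

theorem integral_one_div_cos_sq {a b : ℝ} (h : ∀ t ∈ uIcc a b, cos t ≠ 0) :
    ∫ t in a..b, 1 / cos t ^ 2 = tan b - tan a :=
  intervalIntegral.integral_eq_sub_of_hasDerivAt (fun t ht => hasDerivAt_tan (h t ht))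
    (continuousOn_const.div (by fun_prop) fun t ht => pow_ne_zero 2 (h t ht)).intervalIntegrable

theorem hasDerivAt_log_one_add_sin_div_cos {t : ℝ} (ht : cos t ≠ 0) :
    HasDerivAt (fun y => log ((1 + sin y) / cos y)) (1 / cos t) t := by
  have hsin : 1 + sin t ≠ 0 := by
    intro h
    have hcos_sq : cos t ^ 2 = 0 := by nlinarith [sin_sq_add_cos_sq t]
    exact ht (pow_eq_zero_iff two_ne_zero |>.mp hcos_sq)
  refine ((((hasDerivAt_sin t).const_add 1).div (hasDerivAt_cos t) ht).log
    (div_ne_zero hsin ht)).congr_deriv ?_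
  simp only [Pi.div_apply]
  field_simp
  linear_combination sin_sq_add_cos_sq t

theorem integral_one_div_cos {a b : ℝ} (h : ∀ t ∈ uIcc a b, cos t ≠ 0) :
    ∫ t in a..b, 1 / cos t = log ((1 + sin b) / cos b) - log ((1 + sin a) / cos a) :=
  intervalIntegral.integral_eq_sub_of_hasDerivAt
    (fun t ht => hasDerivAt_log_one_add_sin_div_cos (h t ht))
    (continuousOn_const.div (by fun_prop) h).intervalIntegrable

lemma cos_ne_zero_of_mem_uIcc {a b t : ℝ} (ha : -(π / 2) < a) (hb : b < π / 2) (hab : a ≤ b)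
    (ht : t ∈ uIcc a b) : cos t ≠ 0 := by
  rw [uIcc_of_le hab] at ht
  exact (cos_pos_of_mem_Ioo ⟨by linarith [ht.1], by linarith [ht.2]⟩).ne'

lemma even_one_div_cos_div_four : Function.Even fun x : ℝ => 1 / cos (x / 4) := fun x => by
  simp [neg_div]

lemma memLp_one_div_cos_div_four :
    MemLp (fun x : ℝ => 1 / cos (x / 4)) 2 (volume.restrict (Ioc (-π) π)) := by
  have hpi := pi_pos
  refine memLp_restrict_Ioc_of_continuousOn
    (continuousOn_const.div (by fun_prop) fun t ht => ?_) 2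
  exact (cos_pos_of_mem_Ioo ⟨by linarith [ht.1], by linarith [ht.2]⟩).ne'

lemma fourierA_eq_cosineCoeff (n : ℕ) :
    fourierA n = cosineCoeff (fun x => 1 / cos (x / 4)) n := by
  have hsub := intervalIntegral.integral_comp_div
    (fun t => cos (4 * n * t) / cos t) (a := 0) (b := π) four_ne_zero
  rw [zero_div, smul_eq_mul] at hsub
  calc fourierA n = 2 / π * (4 * ∫ t in (0:ℝ)..π / 4, cos (4 * n * t) / cos t) := by
        rw [fourierA]
        ring
    _ = cosineCoeff (fun x => 1 / cos (x / 4)) n := by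
        rw [← hsub, cosineCoeff]
        congr 1
        refine intervalIntegral.integral_congr fun x _ => ?_
        rw [show 4 * (n : ℝ) * (x / 4) = n * x by ring]
        ring

lemma integral_one_div_cos_div_four_sq : ∫ t in -π..π, 1 / cos (t / 4) ^ 2 = 8 := by
  have hpi := pi_pos
  rw [intervalIntegral.integral_comp_div (fun t => 1 / cos t ^ 2) four_ne_zero,
    integral_one_div_cos_sq fun t => cos_ne_zero_of_mem_uIcc (by linarith) (by linarith)
      (by linarith), neg_div, tan_neg, tan_pi_div_four, smul_eq_mul]
  norm_num

lemma fourierA_zero : fourierA 0 = 8 / π * log (1 + √2) := by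
  have hpi := pi_pos
  have hval : (1 + √2 / 2) / (√2 / 2) = 1 + √2 := by
    field_simp
    linear_combination -sq_sqrt (show (0:ℝ) ≤ 2 by norm_num)
  simp only [fourierA, CharP.cast_eq_zero, mul_zero, zero_mul, cos_zero]
  rw [integral_one_div_cos fun t => cos_ne_zero_of_mem_uIcc (by linarith) (by linarith)
    (by linarith), sin_pi_div_four, cos_pi_div_four, sin_zero, cos_zero, hval]
  norm_num

/-- Parseval's identity for F(x) = 1/cos(x/4) on [-π, π]:
(1/π) ∫_{-π}^{π} dt/cos²(t/4) = a₀²/2 + ∑_{n=1}^∞ aₙ²; in particular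
the series ∑_{n=1}^∞ aₙ² converges and equals 8/π - 32 ln²(1+√2)/π². -/
theorem parseval_inv_cos_quarter :
    Summable (fun n : ℕ => fourierA (n + 1) ^ 2) ∧
    (1 / π) * ∫ t in (-π)..π, 1 / Real.cos (t / 4) ^ 2
      = fourierA 0 ^ 2 / 2 + ∑' n : ℕ, fourierA (n + 1) ^ 2 ∧
    ∑' n : ℕ, fourierA (n + 1) ^ 2
      = 8 / π - 32 * Real.log (1 + Real.sqrt 2) ^ 2 / π ^ 2 := by
  have hsum := hasSum_sq_cosineCoeff even_one_div_cos_div_four memLp_one_div_cos_div_four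
  simp only [← fourierA_eq_cosineCoeff, div_pow, one_pow, integral_one_div_cos_div_four_sq] at hsum
  refine ⟨hsum.summable, ?_, ?_⟩
  · rw [hsum.tsum_eq, integral_one_div_cos_div_four_sq]
    ring
  · rw [hsum.tsum_eq, fourierA_zero]
    ring
end

section
/- π² = 4 ln²(1 + √2) + 8 ∫_{ln(1+√2)}^{∞} arcsinh(csch x) dx, where csch x = 1/sinh x and arcsinh is the inverse hyperbolic sine; the improper integral converges. -/
/-!
The function `g x = arsinh (1 / sinh x) = log (coth (x / 2))` is a decreasing involution of
`(0, ∞)` with fixed point `a = arsinh 1 = log (1 + √2)`. Expanding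
`g x = 2 ∑ e^{-(2n+1)x} / (2n+1)` and integrating termwise gives
`∫₀^∞ g = 2 ∑ 1 / (2n+1)² = π² / 4`. Since the graph of `g` is symmetric about the diagonal,
the area under it over `(0, a]` is the square `a²` plus the area over `(a, ∞)`, so
`π² / 4 = a² + 2 ∫_a^∞ g`.
-/

open Real MeasureTheory Set Filter Topology

theorem hasSum_one_div_odd_sq :
    HasSum (fun n : ℕ => 1 / (2 * (n : ℝ) + 1) ^ 2) (π ^ 2 / 8) := by
  have hzeta := hasSum_zeta_two
  have heven : HasSum (fun n : ℕ => 1 / ((2 * n : ℕ) : ℝ) ^ 2) (π ^ 2 / 24) := by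
    have h := hzeta.mul_left (1 / 4)
    rw [show π ^ 2 / 24 = 1 / 4 * (π ^ 2 / 6) by ring]
    refine h.congr_fun fun n => ?_
    rw [Nat.cast_mul, Nat.cast_ofNat]
    ring
  have hodd : HasSum (fun n : ℕ => 1 / ((2 * n + 1 : ℕ) : ℝ) ^ 2) _ :=
    (hzeta.summable.comp_injective (i := fun n : ℕ => 2 * n + 1)
      fun _ _ h => by simpa using h).hasSum
  have hsum : π ^ 2 / 6 = π ^ 2 / 24 + _ := hzeta.unique
    (HasSum.even_add_odd (f := fun n : ℕ => 1 / (n : ℝ) ^ 2) heven hodd)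
  rw [show π ^ 2 / 8 = π ^ 2 / 6 - π ^ 2 / 24 by ring, hsum, add_sub_cancel_left]
  exact_mod_cast hodd

theorem integral_exp_neg_mul_Ioi_zero {c : ℝ} (hc : 0 < c) :
    ∫ x in Ioi (0 : ℝ), exp (-c * x) = 1 / c := by
  rw [integral_exp_mul_Ioi (neg_lt_zero.mpr hc), mul_zero, exp_zero]
  field_simp

-- Substitute `u = f x`, use `f (f x) = x`, and integrate `x f' x` by parts.
theorem integral_eq_sq_add_integral_sub_of_involutive {f f' : ℝ → ℝ} {a T : ℝ}
    (hf : Function.Involutive f) (ha : f a = a)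
    (hf_deriv : ∀ x ∈ uIcc a T, HasDerivAt f (f' x) x) (hf' : ContinuousOn f' (uIcc a T))
    (hf_img : ContinuousOn f (f '' uIcc a T)) :
    ∫ x in f T..a, f x = a ^ 2 + (∫ x in a..T, f x) - T * f T := by
  have hsubst : ∫ x in a..T, f' x • (f ∘ f) x = ∫ u in f a..f T, f u :=
    intervalIntegral.integral_deriv_smul_comp' hf_deriv hf' hf_img
  have hparts := intervalIntegral.integral_mul_deriv_eq_deriv_mul
    (fun x _ => hasDerivAt_id x) hf_deriv intervalIntegrable_const hf'.intervalIntegrable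
  rw [hf.comp_self, ha] at hsubst
  simp only [id_eq, smul_eq_mul, one_mul, mul_comm (f' _), ha] at hsubst hparts
  rw [intervalIntegral.integral_symm, ← hsubst, hparts]
  ring

theorem integral_eq_sq_add_integral_Ioi_of_tendsto {f : ℝ → ℝ} {a : ℝ} (ha : 0 < a)
    (hint : IntegrableOn f (Ioi 0)) (hf : Tendsto f atTop (𝓝[>] 0))
    (hTf : Tendsto (fun T => T * f T) atTop (𝓝 0))
    (hid : ∀ᶠ T in atTop, ∫ x in f T..a, f x = a ^ 2 + (∫ x in a..T, f x) - T * f T) :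
    ∫ x in 0..a, f x = a ^ 2 + ∫ x in Ioi a, f x := by
  have hlhs : Tendsto (fun T => ∫ x in f T..a, f x) atTop (𝓝 (∫ x in 0..a, f x)) := by
    have hcont : ContinuousOn (fun u => ∫ x in u..a, f x) (uIcc 0 a) :=
      intervalIntegral.continuousOn_primitive_interval_left (by
        rw [uIcc_of_le ha.le, integrableOn_Icc_iff_integrableOn_Ioc]
        exact hint.mono_set Ioc_subset_Ioi_self)
    have hmem : ∀ᶠ T in atTop, f T ∈ uIcc 0 a := by
      filter_upwards [hf (Ioo_mem_nhdsGT ha)] with T hT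
      rw [uIcc_of_le ha.le]
      exact Ioo_subset_Icc_self hT
    exact (hcont 0 left_mem_uIcc).tendsto.comp
      (tendsto_nhdsWithin_of_tendsto_nhds_of_eventually_within _
        (hf.mono_right nhdsWithin_le_nhds) hmem)
  have hrhs : Tendsto (fun T => a ^ 2 + (∫ x in a..T, f x) - T * f T) atTop
      (𝓝 (a ^ 2 + ∫ x in Ioi a, f x)) := by
    simpa using (tendsto_const_nhds.add (intervalIntegral_tendsto_integral_Ioi a
      (hint.mono_set (Ioi_subset_Ioi ha.le)) tendsto_id)).sub hTf
  exact tendsto_nhds_unique (hlhs.congr' hid) hrhs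

theorem arsinh_one : arsinh 1 = log (1 + √2) := by
  rw [arsinh]
  norm_num

theorem arsinh_one_div_sinh_pos {x : ℝ} (hx : 0 < x) : 0 < arsinh (1 / sinh x) :=
  arsinh_pos_iff.mpr (one_div_pos.mpr (sinh_pos_iff.mpr hx))

theorem arsinh_one_div_sinh_involutive : Function.Involutive fun x => arsinh (1 / sinh x) :=
  fun x => by simp only [sinh_arsinh, one_div_one_div, arsinh_sinh]

theorem continuousOn_one_div_sinh : ContinuousOn (fun x => 1 / sinh x) (Ioi 0) :=
  continuousOn_const.div continuous_sinh.continuousOn fun _ hx => (sinh_pos_iff.mpr hx).ne'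

theorem sqrt_one_add_one_div_sinh_sq {x : ℝ} (hx : 0 < x) :
    √(1 + (1 / sinh x) ^ 2) = cosh x / sinh x := by
  have hs : 0 < sinh x := sinh_pos_iff.mpr hx
  rw [← sqrt_sq (div_pos (cosh_pos x) hs).le, div_pow, div_pow, cosh_sq]
  field_simp

theorem hasDerivAt_arsinh_one_div_sinh {x : ℝ} (hx : 0 < x) :
    HasDerivAt (fun x => arsinh (1 / sinh x)) (-(1 / sinh x)) x := by
  have hs : 0 < sinh x := sinh_pos_iff.mpr hx
  convert ((hasDerivAt_const x (1 : ℝ)).fun_div (hasDerivAt_sinh x) hs.ne').arsinh using 1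
  have hc : cosh x ≠ 0 := (cosh_pos x).ne'
  rw [sqrt_one_add_one_div_sinh_sq hx, smul_eq_mul]
  field_simp
  ring

theorem arsinh_one_div_sinh_eq_log_sub_log {x : ℝ} (hx : 0 < x) :
    arsinh (1 / sinh x) = log (1 + exp (-x)) - log (1 - exp (-x)) := by
  have hs : 0 < sinh x := sinh_pos_iff.mpr hx
  have hu : exp (-x) < 1 := exp_lt_one_iff.mpr (neg_lt_zero.mpr hx)
  rw [← log_div (by positivity) (by linarith), arsinh, sqrt_one_add_one_div_sinh_sq hx]
  congr 1
  rw [← add_div, div_eq_div_iff hs.ne' (by linarith), cosh_eq, sinh_eq]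
  have : exp x * exp (-x) = 1 := by rw [← exp_add, add_neg_cancel, exp_zero]
  linear_combination -this

theorem hasSum_arsinh_one_div_sinh {x : ℝ} (hx : 0 < x) :
    HasSum (fun n : ℕ => 2 / (2 * n + 1) * exp (-(2 * n + 1) * x)) (arsinh (1 / sinh x)) := by
  have hu : |exp (-x)| < 1 := by
    rw [abs_of_pos (exp_pos _)]; exact exp_lt_one_iff.mpr (neg_lt_zero.mpr hx)
  convert hasSum_log_sub_log_of_abs_lt_one hu using 1
  · ext n
    rw [← exp_nat_mul]
    push_cast
    ring_nf
  · exact arsinh_one_div_sinh_eq_log_sub_log hx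

theorem integral_arsinh_one_div_sinh_Ioi_zero :
    ∫ x in Ioi (0 : ℝ), arsinh (1 / sinh x) = π ^ 2 / 4 := by
  set F : ℕ → ℝ → ℝ := fun n x => 2 / (2 * n + 1) * exp (-(2 * n + 1) * x)
  have hc (n : ℕ) : (0 : ℝ) < 2 * n + 1 := by positivity
  have hF_int (n : ℕ) : IntegrableOn (F n) (Ioi 0) :=
    (exp_neg_integrableOn_Ioi 0 (hc n)).const_mul _
  have hF_integral (n : ℕ) : ∫ x in Ioi 0, F n x = 2 * (1 / (2 * n + 1) ^ 2) := by
    rw [integral_const_mul, integral_exp_neg_mul_Ioi_zero (hc n)]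
    field_simp
  have hF_norm (n : ℕ) : ∫ x in Ioi 0, ‖F n x‖ = ∫ x in Ioi 0, F n x := by
    congr 1 with x
    exact norm_of_nonneg (by positivity)
  have hsum := hasSum_integral_of_summable_integral_norm hF_int (by
    simp_rw [hF_norm, hF_integral]
    exact (hasSum_one_div_odd_sq.mul_left 2).summable)
  simp_rw [hF_integral] at hsum
  rw [setIntegral_congr_fun measurableSet_Ioi
    fun x hx => (hasSum_arsinh_one_div_sinh hx).tsum_eq.symm,
    ← (hasSum_one_div_odd_sq.mul_left 2).unique hsum]
  ring

theorem integrableOn_arsinh_one_div_sinh_Ioi_zero :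
    IntegrableOn (fun x => arsinh (1 / sinh x)) (Ioi 0) :=
  -- a non-integrable function has Bochner integral `0`
  .of_integral_ne_zero (by rw [integral_arsinh_one_div_sinh_Ioi_zero]; positivity)

theorem arsinh_one_div_sinh_le {x : ℝ} (hx : 1 ≤ x) : arsinh (1 / sinh x) ≤ 4 * exp (-x) := by
  have hs : exp x / 4 ≤ sinh x := by
    have : 2 ≤ exp x := by linarith [add_one_le_exp x]
    have : exp (-x) ≤ 1 := exp_le_one_iff.mpr (by linarith)
    rw [sinh_eq]
    linarith
  have hpos : 0 ≤ 1 / sinh x := (one_div_pos.mpr (sinh_pos_iff.mpr (by linarith))).le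
  calc arsinh (1 / sinh x) ≤ 1 / sinh x :=
        (arsinh_le_arsinh.mpr (self_le_sinh_iff.mpr hpos)).trans_eq (arsinh_sinh _)
    _ ≤ 1 / (exp x / 4) := one_div_le_one_div_of_le (by positivity) hs
    _ = 4 * exp (-x) := by rw [exp_neg]; field_simp

theorem tendsto_arsinh_one_div_sinh_atTop :
    Tendsto (fun x => arsinh (1 / sinh x)) atTop (𝓝[>] 0) := by
  have hexp : Tendsto (fun x : ℝ => 4 * exp (-x)) atTop (𝓝 0) := by
    simpa using tendsto_exp_neg_atTop_nhds_zero.const_mul 4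
  refine tendsto_nhdsWithin_iff.mpr ⟨squeeze_zero' ?_ ?_ hexp, ?_⟩
  · filter_upwards [eventually_gt_atTop 0] with x hx using (arsinh_one_div_sinh_pos hx).le
  · filter_upwards [eventually_ge_atTop 1] with x hx using arsinh_one_div_sinh_le hx
  · filter_upwards [eventually_gt_atTop 0] with x hx using arsinh_one_div_sinh_pos hx

theorem tendsto_mul_arsinh_one_div_sinh_atTop :
    Tendsto (fun x => x * arsinh (1 / sinh x)) atTop (𝓝 0) := by
  have hexp : Tendsto (fun x : ℝ => 4 * (x ^ 1 * exp (-x))) atTop (𝓝 0) := by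
    simpa using (tendsto_pow_mul_exp_neg_atTop_nhds_zero 1).const_mul 4
  refine squeeze_zero' ?_ ?_ hexp
  · filter_upwards [eventually_gt_atTop 0] with x hx
    exact mul_nonneg hx.le (arsinh_one_div_sinh_pos hx).le
  · filter_upwards [eventually_ge_atTop 1] with x hx
    calc x * arsinh (1 / sinh x) ≤ x * (4 * exp (-x)) :=
          mul_le_mul_of_nonneg_left (arsinh_one_div_sinh_le hx) (by linarith)
      _ = 4 * (x ^ 1 * exp (-x)) := by ring

theorem integral_arsinh_one_div_sinh_eq_sq_add_integral_sub {T : ℝ} (hT : arsinh 1 ≤ T) :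
    ∫ x in arsinh (1 / sinh T)..arsinh 1, arsinh (1 / sinh x) =
      arsinh 1 ^ 2 + (∫ x in arsinh 1..T, arsinh (1 / sinh x)) - T * arsinh (1 / sinh T) := by
  have hpos : uIcc (arsinh 1) T ⊆ Ioi 0 := by
    rw [uIcc_of_le hT]
    exact fun x hx => (arsinh_pos_iff.mpr one_pos).trans_le hx.1
  refine integral_eq_sq_add_integral_sub_of_involutive
    (f := fun x => arsinh (1 / sinh x)) arsinh_one_div_sinh_involutive
    (by simp only [sinh_arsinh, div_one]) (fun x hx => hasDerivAt_arsinh_one_div_sinh (hpos hx))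
    (continuousOn_one_div_sinh.neg.mono hpos) (continuousOn_one_div_sinh.arsinh.mono ?_)
  rintro _ ⟨x, hx, rfl⟩
  exact arsinh_one_div_sinh_pos (hpos hx)

/-- π² = 4 ln²(1+√2) + 8 ∫_{ln(1+√2)}^∞ arcsinh(csch x) dx, where csch x = 1/sinh x;
the improper integral converges. -/
theorem pi_sq_arsinh_csch :
    IntegrableOn (fun x : ℝ => Real.arsinh (1 / Real.sinh x))
      (Set.Ioi (Real.log (1 + Real.sqrt 2))) ∧
    π ^ 2 = 4 * Real.log (1 + Real.sqrt 2) ^ 2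
      + 8 * ∫ x in Set.Ioi (Real.log (1 + Real.sqrt 2)),
              Real.arsinh (1 / Real.sinh x) := by
  rw [← arsinh_one]
  have hA : 0 < arsinh 1 := arsinh_pos_iff.mpr one_pos
  have hint := integrableOn_arsinh_one_div_sinh_Ioi_zero
  have hint_A := hint.mono_set (Ioi_subset_Ioi hA.le)
  have hsym := integral_eq_sq_add_integral_Ioi_of_tendsto hA hint
    tendsto_arsinh_one_div_sinh_atTop tendsto_mul_arsinh_one_div_sinh_atTop
    ((eventually_ge_atTop _).mono fun _ hT =>
      integral_arsinh_one_div_sinh_eq_sq_add_integral_sub hT)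
  have hsplit := intervalIntegral.integral_interval_add_Ioi hint hint_A
  rw [integral_arsinh_one_div_sinh_Ioi_zero, hsym] at hsplit
  exact ⟨hint_A, by linarith⟩
end
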